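/- arXiv:1807.07624 — 5 statements merged into one kernel-verified Lean document; each statement's English description precedes it below -/
import Mathlib

section
/- Let R be a commutative ring, A₀ an n×n matrix over R, and define recursively A_{m+1} = fromBlocks A_m 1 1 A_m. Then for every N, the characteristic polynomial of A_N (a matrix of size 2^N · n) equals the product over j = 0, …, N of ((charpoly A₀).comp (X - C((N : R) - 2j)))^(Nat.choose N j). Equivalently, the eigenvalues of A_N are exactly the numbers λ + N - 2j for λ an eigenvalue of A₀ and 0 ≤ j ≤ N, where the multiplicity of the shift by N - 2j is binomial(N, j) times the multiplicity of λ. -/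
open Polynomial

/-- The index type of the `N`-fold iterated graph cylinder matrix over base index `V`. -/
def CylIdx (V : Type*) : ℕ → Type _
  | 0 => V
  | N + 1 => CylIdx V N ⊕ CylIdx V N

instance instFintypeCylIdx (V : Type*) [Fintype V] : ∀ N, Fintype (CylIdx V N)
  | 0 => ‹Fintype V›
  | N + 1 => letI := instFintypeCylIdx V N
             inferInstanceAs (Fintype (CylIdx V N ⊕ CylIdx V N))

instance instDecidableEqCylIdx (V : Type*) [DecidableEq V] : ∀ N, DecidableEq (CylIdx V N)
  | 0 => ‹DecidableEq V›
  | N + 1 => letI := instDecidableEqCylIdx V N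
             inferInstanceAs (DecidableEq (CylIdx V N ⊕ CylIdx V N))

/-- The iterated graph cylinder matrices: `A_{m+1} = [[A_m, I], [I, A_m]]`. -/
def iterCyl {V : Type*} [DecidableEq V] {R : Type*} [CommRing R] (A₀ : Matrix V V R) :
    ∀ N : ℕ, Matrix (CylIdx V N) (CylIdx V N) R
  | 0 => A₀
  | N + 1 => Matrix.fromBlocks (iterCyl A₀ N) 1 1 (iterCyl A₀ N)

/-! Over any commutative ring, `[[1, 0], [-1, 1]] * [[A, B], [B, A]] * [[1, 0], [1, 1]]` is the
block triangular matrix `[[A + B, B], [0, A - B]]` (no inverse of 2 is needed, unlike for the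
diagonalisation by `[[1, 1], [1, -1]]`). Hence `χ(A_{N+1})(X) = χ(A_N)(X - 1) * χ(A_N)(X + 1)`:
the factor `χ(A₀)(X - (N - 2j))` of multiplicity `C(N, j)` splits into the shifts by `N + 1 - 2j`
and `N + 1 - 2(j + 1)`, and Pascal's rule collects the multiplicities. -/

namespace Matrix

variable {R : Type*} [CommRing R] {m : Type*} [Fintype m] [DecidableEq m]

theorem charpoly_fromBlocks_self (A B : Matrix m m R) :
    (fromBlocks A B B A).charpoly = (A + B).charpoly * (A - B).charpoly := by
  set P : Matrix (m ⊕ m) (m ⊕ m) R := fromBlocks 1 0 1 1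
  set Q : Matrix (m ⊕ m) (m ⊕ m) R := fromBlocks 1 0 (-1) 1
  have hPQ : P * Q = 1 := by simp [P, Q, fromBlocks_multiply, ← fromBlocks_one]
  have hconj : Q * (fromBlocks A B B A * P) = fromBlocks (A + B) B 0 (A - B) := by
    simp only [P, Q, fromBlocks_multiply, fromBlocks_inj]
    refine ⟨?_, ?_, ?_, ?_⟩ <;> noncomm_ring
  rw [← charpoly_fromBlocks_zero₂₁, ← hconj, charpoly_mul_comm, mul_assoc, hPQ, mul_one]

theorem charpoly_add_scalar (A : Matrix m m R) (c : R) :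
    (A + scalar m c).charpoly = A.charpoly.comp (X - C c) := by
  simpa [sub_eq_add_neg] using charpoly_sub_scalar A (-c)

theorem charpoly_fromBlocks_one_one (A : Matrix m m R) :
    (fromBlocks A 1 1 A).charpoly = A.charpoly.comp (X - C 1) * A.charpoly.comp (X - C (-1)) := by
  rw [charpoly_fromBlocks_self, ← charpoly_add_scalar, ← charpoly_add_scalar, map_one, map_neg,
    map_one, sub_eq_add_neg]

end Matrix

namespace Polynomial

variable {R : Type*} [CommRing R]

theorem comp_X_sub_C_comp_X_sub_C (p : R[X]) (a b : R) :
    (p.comp (X - C a)).comp (X - C b) = p.comp (X - C (a + b)) := by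
  rw [comp_assoc, sub_comp, X_comp, C_comp, C_add, sub_sub, add_comm]

theorem prod_pow_comp_X_sub_C_comp_X_sub_C {ι : Type*} (s : Finset ι) (p : R[X]) (a : ι → R)
    (k : ι → ℕ) (b : R) :
    (∏ i ∈ s, (p.comp (X - C (a i))) ^ k i).comp (X - C b) =
      ∏ i ∈ s, (p.comp (X - C (a i + b))) ^ k i := by
  simp only [prod_comp, pow_comp, comp_X_sub_C_comp_X_sub_C]

end Polynomial

theorem charpoly_iterCyl_succ {V : Type*} [Fintype V] [DecidableEq V] {R : Type*} [CommRing R]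
    (A₀ : Matrix V V R) (N : ℕ) :
    (iterCyl A₀ (N + 1)).charpoly =
      (iterCyl A₀ N).charpoly.comp (X - C 1) * (iterCyl A₀ N).charpoly.comp (X - C (-1)) :=
  Matrix.charpoly_fromBlocks_one_one (iterCyl A₀ N)

theorem iterCyl_charpoly {R : Type*} [CommRing R] {n : ℕ}
    (A₀ : Matrix (Fin n) (Fin n) R) (N : ℕ) :
    (iterCyl A₀ N).charpoly =
      ∏ j ∈ Finset.range (N + 1),
        (A₀.charpoly.comp (X - C ((N : R) - 2 * (j : R)))) ^ (N.choose j) := by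
  induction N with
  | zero => show A₀.charpoly = _; simp
  | succ N ih =>
    rw [charpoly_iterCyl_succ, ih, prod_pow_comp_X_sub_C_comp_X_sub_C,
      prod_pow_comp_X_sub_C_comp_X_sub_C]
    have shift_up (j : ℕ) : (N : R) - 2 * j + 1 = ((N + 1 : ℕ) : R) - 2 * j := by
      push_cast; ring
    have shift_down (j : ℕ) : (N : R) - 2 * j + -1 = ((N + 1 : ℕ) : R) - 2 * (j + 1 : ℕ) := by
      push_cast; ring
    simp only [shift_up, shift_down]
    exact (Finset.prod_pow_choose_succ
      (fun j _ => A₀.charpoly.comp (X - C (((N + 1 : ℕ) : R) - 2 * j))) N).symm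
end

section
/- Let G be a connected non-bipartite k-regular simple graph on a nonempty finite vertex type, with real adjacency matrix A₀, and define recursively A_{m+1} = fromBlocks A_m 1 1 A_m. Then for every N, the number k + N is an eigenvalue of A_N but -(k + N) is not an eigenvalue of A_N; in particular the multiset of eigenvalues of A_N is not invariant under negation, i.e. the eigenvalue distribution of the iterated graph cylinder of a non-bipartite graph is asymmetric. -/
/-! For a `k`-regular graph with adjacency matrix `A`,
`vᵀ (k + A) v = ½ ∑_{i ~ j} (v i + v j)²`. Hence every eigenvalue of `A` is at least `-k`, and an
eigenvector for `-k` satisfies `v j = -v i` along every edge; on a connected graph it vanishes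
nowhere and its sign is a proper 2-colouring. So all eigenvalues of a connected non-bipartite
`k`-regular graph exceed `-k`.

An eigenvector `(x, y)` of `[[A, I], [I, A]]` for `μ` yields eigenvectors `x + y` and `x - y` of
`A` (or zero vectors) for `μ - 1` and `μ + 1`; thus a strict lower bound `c` on the spectrum of
`A` becomes `c - 1`, and all eigenvalues of `A_N` exceed `-(k + N)`. The all-ones vector has
eigenvalue `k + N`. -/

open Matrix Finset

namespace Matrix

variable {n K : Type*} [Fintype n] [DecidableEq n] [Field K]

theorem mem_spectrum_iff_exists_mulVec_eq_smul {A : Matrix n n K} {μ : K} :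
    μ ∈ spectrum K A ↔ ∃ v, v ≠ 0 ∧ A *ᵥ v = μ • v := by
  rw [← spectrum_toLin', ← Module.End.hasEigenvalue_iff_mem_spectrum]
  constructor
  · intro h
    obtain ⟨v, hv, hv0⟩ := h.exists_hasEigenvector
    exact ⟨v, hv0, by simpa using Module.End.mem_eigenspace_iff.mp hv⟩
  · rintro ⟨v, hv0, hv⟩
    exact Module.End.hasEigenvalue_of_hasEigenvector
      ⟨Module.End.mem_eigenspace_iff.mpr (by simpa using hv), hv0⟩

theorem mem_spectrum_of_mulVec_eq_smul {A : Matrix n n K} {μ : K} {v : n → K} (hv0 : v ≠ 0)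
    (hv : A *ᵥ v = μ • v) : μ ∈ spectrum K A :=
  mem_spectrum_iff_exists_mulVec_eq_smul.mpr ⟨v, hv0, hv⟩

theorem fromBlocks_one_one_mulVec_eq_smul {A : Matrix n n K} {μ : K} {x y : n → K}
    (h : fromBlocks A 1 1 A *ᵥ Sum.elim x y = μ • Sum.elim x y) :
    A *ᵥ (x + y) = (μ - 1) • (x + y) ∧ A *ᵥ (x - y) = (μ + 1) • (x - y) := by
  have hx : A *ᵥ x = μ • x - y := by
    ext i
    simpa [fromBlocks_mulVec, eq_sub_iff_add_eq] using congrFun h (.inl i)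
  have hy : A *ᵥ y = μ • y - x := by
    ext i
    simpa [fromBlocks_mulVec, eq_sub_iff_add_eq, add_comm] using congrFun h (.inr i)
  rw [mulVec_add, mulVec_sub, hx, hy]
  constructor <;> module

variable [LinearOrder K] [IsStrictOrderedRing K]

theorem sub_one_lt_of_mem_spectrum_fromBlocks_one_one {A : Matrix n n K} {c : K}
    (h : ∀ μ ∈ spectrum K A, c < μ) {μ : K} (hμ : μ ∈ spectrum K (fromBlocks A 1 1 A)) :
    c - 1 < μ := by
  obtain ⟨v, hv0, hv⟩ := mem_spectrum_iff_exists_mulVec_eq_smul.mp hμ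
  rw [← Sum.elim_comp_inl_inr v] at hv
  obtain ⟨hadd, hsub⟩ := fromBlocks_one_one_mulVec_eq_smul hv
  by_contra! hle
  have hxy : v ∘ Sum.inl - v ∘ Sum.inr = 0 := by
    by_contra hne
    linarith [h _ (mem_spectrum_of_mulVec_eq_smul hne hsub)]
  have hxy' : v ∘ Sum.inl + v ∘ Sum.inr = 0 := by
    by_contra hne
    linarith [h _ (mem_spectrum_of_mulVec_eq_smul hne hadd)]
  refine hv0 (funext fun i => ?_)
  have hsub_i := congrFun hxy
  have hadd_i := congrFun hxy'
  simp only [Pi.sub_apply, Pi.add_apply, Function.comp_apply, Pi.zero_apply] at hsub_i hadd_i ⊢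
  rcases i with i | i <;> linarith [hsub_i i, hadd_i i]

end Matrix

namespace SimpleGraph

variable {V R : Type*} {G : SimpleGraph V}

theorem Connected.colorable_two_of_adj_add_eq_zero [AddCommGroup R] [LinearOrder R]
    [IsOrderedAddMonoid R] (hconn : G.Connected) {v : V → R} (hv0 : v ≠ 0)
    (hv : ∀ i j, G.Adj i j → v i + v j = 0) : G.Colorable 2 := by
  have habs : ∀ i j, G.Reachable i j → |v i| = |v j| := by
    rintro i j ⟨p⟩
    induction p with
    | nil => rfl
    | cons hadj _ ih => rw [← ih, eq_neg_of_add_eq_zero_right (hv _ _ hadj), abs_neg]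
  obtain ⟨i₀, hi₀⟩ := Function.ne_iff.mp hv0
  have hne : ∀ i, v i ≠ 0 := fun i =>
    abs_ne_zero.mp (habs i₀ i (hconn i₀ i) ▸ abs_ne_zero.mpr hi₀)
  let C : G.Coloring Bool := Coloring.mk (fun i => decide (0 < v i)) fun {i j} hij => by
    rw [eq_neg_of_add_eq_zero_right (hv i j hij)]
    rcases (hne i).lt_or_gt with h | h <;> simp [h, h.le]
  simpa using C.colorable

variable [Fintype V] [DecidableEq V] [DecidableRel G.Adj]

variable (G) in
theorem dotProduct_mulVec_degMatrix_add_adjMatrix [Field R] [CharZero R] (x : V → R) :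
    x ⬝ᵥ ((G.degMatrix R + G.adjMatrix R) *ᵥ x) =
      (∑ i, ∑ j, if G.Adj i j then (x i + x j) ^ 2 else 0) / 2 := by
  simp_rw [add_mulVec, dotProduct_add, dotProduct_mulVec_degMatrix,
    dotProduct_mulVec_adjMatrix, ← sum_add_distrib, degree_eq_sum_if_adj, sum_mul, ite_mul,
    one_mul, zero_mul, ← sum_add_distrib, ite_add_ite, add_zero]
  rw [← add_self_div_two (∑ i : V, ∑ j : V, _)]
  conv_lhs => enter [1, 2, 2, i, 2, j]; rw [if_congr (adj_comm G i j) rfl rfl]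
  conv_lhs => enter [1, 2]; rw [Finset.sum_comm]
  simp_rw [← sum_add_distrib, ite_add_ite]
  congr 2 with i
  congr 2 with j
  ring_nf

theorem IsRegularOfDegree.sum_adj_add_sq [Field R] [CharZero R] {k : ℕ}
    (hreg : G.IsRegularOfDegree k) {μ : R} {v : V → R} (hv : G.adjMatrix R *ᵥ v = μ • v) :
    (∑ i, ∑ j, if G.Adj i j then (v i + v j) ^ 2 else 0) = 2 * ((k + μ) * (v ⬝ᵥ v)) := by
  have hdeg : (G.degMatrix R + G.adjMatrix R) *ᵥ v = (k + μ) • v := by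
    ext i
    simp [add_mulVec, degMatrix_mulVec_apply, hreg i, hv, add_mul]
  have hform := dotProduct_mulVec_degMatrix_add_adjMatrix G v
  rw [hdeg, dotProduct_smul, smul_eq_mul] at hform
  linear_combination (-2 : R) * hform

variable [Field R] [LinearOrder R] [IsStrictOrderedRing R]

theorem IsRegularOfDegree.neg_le_of_mem_spectrum {k : ℕ} (hreg : G.IsRegularOfDegree k) {μ : R}
    (hμ : μ ∈ spectrum R (G.adjMatrix R)) : -k ≤ μ := by
  obtain ⟨v, hv0, hv⟩ := mem_spectrum_iff_exists_mulVec_eq_smul.mp hμ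
  have hnonneg : 0 ≤ (k + μ) * (v ⬝ᵥ v) := by
    rw [← mul_nonneg_iff_of_pos_left two_pos, ← hreg.sum_adj_add_sq hv]
    positivity
  have hpos : 0 < v ⬝ᵥ v := (Finset.sum_nonneg fun i _ => mul_self_nonneg (v i)).lt_of_ne'
    (dotProduct_self_eq_zero.not.mpr hv0)
  have := (mul_nonneg_iff_of_pos_right hpos).mp hnonneg
  linarith

theorem IsRegularOfDegree.neg_lt_of_mem_spectrum {k : ℕ} (hreg : G.IsRegularOfDegree k)
    (hconn : G.Connected) (hnb : ¬ G.Colorable 2) {μ : R}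
    (hμ : μ ∈ spectrum R (G.adjMatrix R)) : -k < μ := by
  refine (hreg.neg_le_of_mem_spectrum hμ).lt_of_ne fun heq => hnb ?_
  obtain ⟨v, hv0, hv⟩ := mem_spectrum_iff_exists_mulVec_eq_smul.mp hμ
  refine hconn.colorable_two_of_adj_add_eq_zero hv0 fun i j hij => ?_
  have hsum : (∑ i, ∑ j, if G.Adj i j then (v i + v j) ^ 2 else 0) = 0 := by
    rw [hreg.sum_adj_add_sq hv, ← heq]
    ring
  simp (disch := intros; positivity) only [sum_eq_zero_iff_of_nonneg] at hsum
  simpa [hij] using hsum i (mem_univ i) j (mem_univ j)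

end SimpleGraph

instance instNonemptyCylIdx (V : Type*) [Nonempty V] : ∀ N, Nonempty (CylIdx V N)
  | 0 => ‹Nonempty V›
  | N + 1 => letI := instNonemptyCylIdx V N
             inferInstanceAs (Nonempty (CylIdx V N ⊕ CylIdx V N))

section iterCyl

variable {V K : Type*} [Fintype V] [DecidableEq V] {A₀ : Matrix V V K} {c : K}

theorem iterCyl_mulVec_one [CommRing K] (h : A₀ *ᵥ 1 = c • 1) :
    ∀ N, iterCyl A₀ N *ᵥ 1 = (c + N) • 1
  | 0 => by rw [Nat.cast_zero, add_zero]; exact h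
  | N + 1 => by
    -- restate over the sum type, whose `Fintype` instance `fromBlocks_mulVec` expects
    change fromBlocks (iterCyl A₀ N) 1 1 (iterCyl A₀ N) *ᵥ
      (1 : CylIdx V N ⊕ CylIdx V N → K) = (c + ↑(N + 1)) • 1
    rw [fromBlocks_mulVec, Pi.one_comp, Pi.one_comp, one_mulVec, iterCyl_mulVec_one h N]
    ext (i | i) <;>
      simp only [Sum.elim_inl, Sum.elim_inr, Pi.add_apply, Pi.smul_apply, Pi.one_apply,
        smul_eq_mul, mul_one, Nat.cast_add, Nat.cast_one] <;>
      ring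

theorem sub_lt_of_mem_spectrum_iterCyl [Field K] [LinearOrder K] [IsStrictOrderedRing K]
    (h : ∀ μ ∈ spectrum K A₀, c < μ) :
    ∀ N, ∀ μ ∈ spectrum K (iterCyl A₀ N), c - N < μ
  | 0 => by rw [Nat.cast_zero, sub_zero]; exact h
  | N + 1 => fun μ hμ => by
    have := sub_one_lt_of_mem_spectrum_fromBlocks_one_one (sub_lt_of_mem_spectrum_iterCyl h N) hμ
    push_cast
    linarith

end iterCyl

theorem iterCyl_nonbipartite_asymmetric {V : Type*} [Fintype V] [DecidableEq V] [Nonempty V]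
    (G : SimpleGraph V) [DecidableRel G.Adj]
    (hconn : G.Connected) (hnonbip : ¬ G.Colorable 2)
    (k : ℕ) (hreg : G.IsRegularOfDegree k) (N : ℕ) :
    (iterCyl (G.adjMatrix ℝ) N).charpoly.IsRoot ((k : ℝ) + N) ∧
    ¬ (iterCyl (G.adjMatrix ℝ) N).charpoly.IsRoot (-((k : ℝ) + N)) ∧
    (iterCyl (G.adjMatrix ℝ) N).charpoly.roots.map (fun x => -x) ≠
      (iterCyl (G.adjMatrix ℝ) N).charpoly.roots := by
  have hroot : (iterCyl (G.adjMatrix ℝ) N).charpoly.IsRoot ((k : ℝ) + N) := by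
    rw [← mem_spectrum_iff_isRoot_charpoly]
    refine mem_spectrum_of_mulVec_eq_smul one_ne_zero (iterCyl_mulVec_one ?_ N)
    ext i
    simpa using SimpleGraph.adjMatrix_mulVec_const_apply_of_regular hreg (a := (1 : ℝ)) (v := i)
  have hnot : ¬ (iterCyl (G.adjMatrix ℝ) N).charpoly.IsRoot (-((k : ℝ) + N)) := by
    rw [← mem_spectrum_iff_isRoot_charpoly]
    intro hmem
    have := sub_lt_of_mem_spectrum_iterCyl
      (fun _ => hreg.neg_lt_of_mem_spectrum hconn hnonbip) N _ hmem
    linarith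
  refine ⟨hroot, hnot, fun hsymm => hnot ?_⟩
  have hmem := Multiset.mem_map_of_mem (fun x => -x)
    ((Polynomial.mem_roots (charpoly_monic _).ne_zero).mpr hroot)
  rw [hsymm] at hmem
  exact Polynomial.isRoot_of_mem_roots hmem
end

section
/- For all natural numbers n ≥ 1 and k with k ≤ n, the central binomial coefficients satisfy (2n).choose (n - k) * (n + k)^k ≤ (2n).choose n * n^k; that is, the ratio binomial(2n, n-k) / binomial(2n, n) is at most (n / (n + k))^k, so the binomial mass function decays at least geometrically away from its center. -/
lemma aux1 : ∀ (k a : ℕ), k ≤ a → (a - k) * (a + 1) ^ k ≤ a ^ (k + 1) := by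
  intro k
  induction k with
  | zero => intro a _; simp [pow_succ]
  | succ k ih =>
    intro a ha
    have hka : k ≤ a := Nat.le_of_succ_le ha
    have h := ih a hka
    have key : (a - (k + 1)) * (a + 1) ^ (k + 1) + (a + 1) ^ (k + 1)
        = (a - k) * (a + 1) ^ (k + 1) := by
      have : a - (k + 1) + 1 = a - k := by omega
      rw [← this]; ring
    have h2 : (a - k) * (a + 1) ^ (k + 1) ≤ a ^ (k + 1) * (a + 1) := by
      calc (a - k) * (a + 1) ^ (k + 1) = (a - k) * (a + 1) ^ k * (a + 1) := by ring
        _ ≤ a ^ (k + 1) * (a + 1) := Nat.mul_le_mul_right _ h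
    have h3 : a ^ (k + 1) * (a + 1) = a ^ (k + 1 + 1) + a ^ (k + 1) := by ring
    have h4 : a ^ (k + 1) ≤ (a + 1) ^ (k + 1) :=
      Nat.pow_le_pow_left (Nat.le_succ a) _
    omega

lemma aux2 (n k : ℕ) (hn : 1 ≤ n) (hk : k ≤ n) :
    (n - k) * (n + k + 1) ^ k ≤ n * (n + k) ^ k := by
  have h1 : n * (n + k + 1) ^ k ≤ (n + k) ^ (k + 1) := by
    have := aux1 k (n + k) (Nat.le_add_left k n)
    simpa using this
  have h2 : (n - k) * (n + k + 1) ^ k * n ≤ (n - k) * (n + k) ^ (k + 1) := by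
    calc (n - k) * (n + k + 1) ^ k * n = (n - k) * (n * (n + k + 1) ^ k) := by ring
      _ ≤ (n - k) * (n + k) ^ (k + 1) := Nat.mul_le_mul_left _ h1
  have h3 : (n - k) * (n + k) ^ (k + 1) ≤ n * (n + k) ^ k * n := by
    calc (n - k) * (n + k) ^ (k + 1) = ((n - k) * (n + k)) * (n + k) ^ k := by ring
      _ ≤ (n * n) * (n + k) ^ k := by
          apply Nat.mul_le_mul_right
          have : (n - k) * (n + k) ≤ n * n := by
            rcases Nat.le.dest hk with ⟨d, rfl⟩
            simp [Nat.add_sub_cancel_left]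
            nlinarith
          exact this
      _ = n * (n + k) ^ k * n := by ring
  have := le_trans h2 h3
  exact Nat.le_of_mul_le_mul_right this hn

theorem central_binomial_ratio_decay (n k : ℕ) (hn : 1 ≤ n) (hk : k ≤ n) :
    (2 * n).choose (n - k) * (n + k) ^ k ≤ (2 * n).choose n * n ^ k := by
  induction k with
  | zero => simp
  | succ k ih =>
    have hkn : k ≤ n := Nat.le_of_succ_le hk
    have IH := ih hkn
    -- choose identity: C(2n, n-k-1) * (n+k+1) = C(2n, n-k) * (n-k)
    have hid : (2 * n).choose (n - (k + 1)) * (n + k + 1) =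
        (2 * n).choose (n - k) * (n - k) := by
      have h1 : n - (k + 1) + 1 = n - k := by omega
      have := Nat.choose_succ_right_eq (2 * n) (n - (k + 1))
      rw [h1] at this
      have h2 : 2 * n - (n - (k + 1)) = n + k + 1 := by omega
      rw [h2] at this
      omega
    calc (2 * n).choose (n - (k + 1)) * (n + (k + 1)) ^ (k + 1)
        = ((2 * n).choose (n - (k + 1)) * (n + k + 1)) * (n + k + 1) ^ k := by ring_nf
      _ = (2 * n).choose (n - k) * ((n - k) * (n + k + 1) ^ k) := by rw [hid]; ring
      _ ≤ (2 * n).choose (n - k) * (n * (n + k) ^ k) :=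
          Nat.mul_le_mul_left _ (aux2 n k hn hkn)
      _ = n * ((2 * n).choose (n - k) * (n + k) ^ k) := by ring
      _ ≤ n * ((2 * n).choose n * n ^ k) := Nat.mul_le_mul_left _ IH
      _ = (2 * n).choose n * n ^ (k + 1) := by ring
end

section
/- Let Q_n denote the hypercube graph on the vertex set Fin n → Bool, where two vertices are adjacent if and only if they differ in exactly one coordinate, and let A be its adjacency matrix over ℝ (or ℚ). Then charpoly(A) = ∏_{j=0}^{n} (X - C((n : ℝ) - 2j))^(Nat.choose n j); that is, the eigenvalues of Q_n are n - 2j with multiplicity binomial(n, j) for j = 0, …, n. -/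
open Polynomial

/-- The hypercube graph `Q_n` on `Fin n → Bool`: two vertices are adjacent iff they
differ in exactly one coordinate. -/
def hypercube (n : ℕ) : SimpleGraph (Fin n → Bool) where
  Adj u v := ∃! i, u i ≠ v i
  symm := by
    constructor
    rintro u v ⟨i, hi, huniq⟩
    exact ⟨i, Ne.symm hi, fun j hj => huniq j (Ne.symm hj)⟩
  loopless := by
    constructor
    rintro u ⟨i, hi, -⟩
    exact hi rfl

noncomputable instance (n : ℕ) : DecidableRel (hypercube n).Adj := Classical.decRel _

/-! The Walsh characters `χ_s u = ∏ i ∈ s, (-1) ^ (u i)`, one for each `s : Finset (Fin n)`, are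
eigenvectors of the adjacency matrix of `Q_n`: flipping coordinate `i` multiplies `χ_s` by `-1` if
`i ∈ s` and by `1` otherwise, so summing over the `n` neighbours gives the eigenvalue `n - 2 #s`.
The characters are orthogonal, so the Walsh matrix is invertible as soon as `2` is, and `A` is similar
to the diagonal matrix of these eigenvalues; grouping the subsets by size gives the multiplicities
`n.choose j`. -/

open Finset
open scoped Matrix

theorem Finset.prod_powerset_apply_card {M β : Type*} [CommMonoid M] (f : ℕ → M) {x : Finset β} :
    ∏ m ∈ x.powerset, f #m = ∏ m ∈ range (#x + 1), f m ^ (#x).choose m := by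
  simpa using
    congrArg Additive.toMul (sum_powerset_apply_card (fun m ↦ Additive.ofMul (f m)) (x := x))

theorem Matrix.charpoly_eq_of_mul_eq_mul {m n R : Type*} [Fintype m] [DecidableEq m] [Fintype n]
    [DecidableEq n] [CommRing R] (hcard : Fintype.card m = Fintype.card n) {A : Matrix m m R}
    {D : Matrix n n R} {P : Matrix m n R} {Q : Matrix n m R} (hQP : Q * P = 1)
    (hAP : A * P = P * D) : A.charpoly = D.charpoly := by
  have hPQ : P * Q = 1 := (mul_eq_one_comm_of_card_eq n m R hcard.symm).mp hQP
  calc A.charpoly = (P * (D * Q)).charpoly := by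
        rw [← Matrix.mul_assoc, ← hAP, Matrix.mul_assoc, hPQ, Matrix.mul_one]
    _ = (D * Q * P).charpoly := by
        rw [charpoly_mul_comm_of_le _ _ hcard.ge, hcard, Nat.sub_self, pow_zero, one_mul]
    _ = D.charpoly := by rw [Matrix.mul_assoc, hQP, Matrix.mul_one]

section Walsh

variable (ι R : Type*) [DecidableEq ι] [CommRing R]

def walshMatrix : Matrix (ι → Bool) (Finset ι) R :=
  Matrix.of fun u s ↦ ∏ i ∈ s, if u i then -1 else 1

variable {ι R}

theorem walshMatrix_update_not (u : ι → Bool) (i : ι) (s : Finset ι) :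
    walshMatrix ι R (Function.update u i (!u i)) s =
      (if i ∈ s then -1 else 1) * walshMatrix ι R u s := by
  simp only [walshMatrix, Matrix.of_apply,
    Function.apply_update (fun _ b ↦ if b = true then (-1 : R) else 1)]
  by_cases hi : i ∈ s
  · rw [if_pos hi, prod_update_of_mem hi, ← mul_prod_erase s _ hi, sdiff_singleton_eq_erase,
      ← mul_assoc]
    cases u i <;> simp
  · rw [if_neg hi, prod_update_of_notMem hi, one_mul]

variable [Fintype ι]

theorem walshMatrix_transpose_mul_self :
    (walshMatrix ι R)ᵀ * walshMatrix ι R = (2 ^ Fintype.card ι : R) • 1 := by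
  ext s t
  set χ : Finset ι → ι → Bool → R := fun s i b ↦ if i ∈ s then (if b then -1 else 1) else 1
  have hcoord (i : ι) : ∑ b, χ s i b * χ t i b = if i ∈ s ↔ i ∈ t then 2 else 0 := by
    by_cases hs : i ∈ s <;> by_cases ht : i ∈ t <;> simp [χ, hs, ht]; norm_num
  have hwalsh (s : Finset ι) (u : ι → Bool) : walshMatrix ι R u s = ∏ i, χ s i (u i) :=
    (Fintype.prod_ite_mem s _).symm
  calc ((walshMatrix ι R)ᵀ * walshMatrix ι R) s t
      = ∑ u : ι → Bool, ∏ i, χ s i (u i) * χ t i (u i) := by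
        simp only [Matrix.mul_apply, Matrix.transpose_apply, hwalsh, prod_mul_distrib]
    _ = ∏ i, if i ∈ s ↔ i ∈ t then (2 : R) else 0 := by
        rw [← Fintype.prod_sum fun i b ↦ χ s i b * χ t i b]
        exact prod_congr rfl fun i _ ↦ hcoord i
    _ = ((2 ^ Fintype.card ι : R) • (1 : Matrix (Finset ι) (Finset ι) R)) s t := by
        by_cases hst : s = t
        · subst hst
          simp
        · obtain ⟨i, hi⟩ : ∃ i, ¬(i ∈ s ↔ i ∈ t) := by simpa [Finset.ext_iff] using hst
          rw [prod_eq_zero (mem_univ i) (if_neg hi)]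
          simp [hst]

end Walsh

theorem Function.update_not_injective {ι : Type*} [DecidableEq ι] (u : ι → Bool) :
    Function.Injective fun i ↦ Function.update u i (!u i) := by
  intro i j h
  by_contra hij
  simpa [Function.update_of_ne hij] using congrFun h i

theorem hypercube_adj_iff {n : ℕ} {u v : Fin n → Bool} :
    (hypercube n).Adj u v ↔ ∃ i, Function.update u i (!u i) = v := by
  constructor
  · rintro ⟨i, hi, huniq⟩
    refine ⟨i, funext fun j ↦ ?_⟩
    rcases eq_or_ne j i with rfl | hj
    · rw [Function.update_self]
      exact (Bool.eq_not.mpr hi.symm).symm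
    · rw [Function.update_of_ne hj]
      by_contra h
      exact hj (huniq j h)
  · rintro ⟨i, rfl⟩
    refine ⟨i, by simp, fun j hj ↦ ?_⟩
    by_contra h
    exact hj (Function.update_of_ne h (!u i) u).symm

theorem hypercube_neighborFinset (n : ℕ) (u : Fin n → Bool) :
    (hypercube n).neighborFinset u = univ.image fun i ↦ Function.update u i (!u i) := by
  ext v
  simp [hypercube_adj_iff]

theorem hypercube_adjMatrix_mul_walshMatrix (R : Type*) [CommRing R] (n : ℕ) :
    (hypercube n).adjMatrix R * walshMatrix (Fin n) R =
      walshMatrix (Fin n) R * Matrix.diagonal fun s : Finset (Fin n) ↦ (n : R) - 2 * #s := by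
  ext u s
  rw [Matrix.mul_diagonal, Matrix.mul_apply]
  simp only [SimpleGraph.adjMatrix_apply, ite_mul, one_mul, zero_mul]
  rw [← sum_filter, ← SimpleGraph.neighborFinset_eq_filter, hypercube_neighborFinset,
    sum_image fun i _ j _ h ↦ Function.update_not_injective u h]
  simp_rw [walshMatrix_update_not, ← sum_mul, mul_comm (walshMatrix _ _ u s)]
  congr 1
  rw [sum_ite, sum_const, sum_const, filter_mem_eq_inter, univ_inter, filter_notMem_eq_sdiff,
    card_univ_sdiff, Fintype.card_fin, nsmul_eq_mul, nsmul_eq_mul,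
    Nat.cast_sub (card_le_univ s |>.trans_eq (Fintype.card_fin n))]
  ring

theorem hypercube_adjMatrix_charpoly (K : Type*) [Field K] [NeZero (2 : K)] (n : ℕ) :
    ((hypercube n).adjMatrix K).charpoly =
      ∏ j ∈ range (n + 1), (X - C ((n : K) - 2 * j)) ^ n.choose j := by
  have hinv : ((2 ^ n : K)⁻¹ • (walshMatrix (Fin n) K)ᵀ) * walshMatrix (Fin n) K = 1 := by
    rw [Matrix.smul_mul, walshMatrix_transpose_mul_self, Fintype.card_fin, smul_smul,
      inv_mul_cancel₀ (pow_ne_zero n two_ne_zero), one_smul]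
  rw [Matrix.charpoly_eq_of_mul_eq_mul (by simp) hinv (hypercube_adjMatrix_mul_walshMatrix K n),
    Matrix.charpoly_diagonal, ← powerset_univ,
    prod_powerset_apply_card fun j ↦ X - C ((n : K) - 2 * j), card_univ, Fintype.card_fin]

theorem hypercube_charpoly (n : ℕ) :
    ((hypercube n).adjMatrix ℝ).charpoly =
      ∏ j ∈ Finset.range (n + 1), (X - C ((n : ℝ) - 2 * (j : ℝ))) ^ (n.choose j) :=
  hypercube_adjMatrix_charpoly ℝ n
end

section
/- Let A₀ be the adjacency matrix of the square graph Q₂ (the 4-cycle, which is 2-regular), and define recursively A_{m+1} = fromBlocks A_m 1 1 A_m. Then for every N, the largest eigenvalue of A_N is N + 2, the second largest eigenvalue of A_N is N, and hence the spectral gap λ₁ - λ₂ of the normalized matrix W_N = A_N / (N + 2) is exactly 2 / (N + 2). -/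
/-!
The eigenvalues of `[[A, I], [I, A]]` are those of `A` shifted by `+1` together with those shifted
by `-1`: conjugating by `[[I, I], [0, I]]` makes the matrix block triangular with diagonal blocks
`A + I` and `A - I`. Since `Q₂` is itself the twice iterated cylinder of a single vertex, the
spectrum of `A_N` is obtained from `{0}` by `N + 2` such steps. If the two largest values are
`a` and `a - 2` and all others are at most `a - 2`, one step makes them `a + 1` and `a - 1` with
all others at most `a - 1`; so they are `N + 2` and `N`. Scaling by `(N + 2)⁻¹ > 0` preserves the
order, and the gap becomes `1 - N / (N + 2)`.
-/

open Polynomial Matrix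

def cylSpectrum {R : Type*} [Ring R] (s : Multiset R) : Multiset R :=
  s.map (· + 1) + s.map (· - 1)

section CommRing

variable {R : Type*} [CommRing R] {n : Type*} [Fintype n] [DecidableEq n]

theorem Matrix.charpoly_fromBlocks_one_one_s14 (A : Matrix n n R) :
    (fromBlocks A 1 1 A).charpoly = (A + 1).charpoly * (A - 1).charpoly := by
  have hconj : (fromBlocks 1 1 0 1 * fromBlocks A 1 1 A * fromBlocks 1 (-1) 0 1 :
      Matrix (n ⊕ n) (n ⊕ n) R) = fromBlocks (A + 1) 0 1 (A - 1) := by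
    simp only [fromBlocks_multiply]
    congr 1 <;> noncomm_ring
  have hinv : (fromBlocks 1 (-1) 0 1 * fromBlocks 1 1 0 1 : Matrix (n ⊕ n) (n ⊕ n) R) = 1 := by
    simp [fromBlocks_multiply, fromBlocks_one]
  rw [← charpoly_fromBlocks_zero₁₂, ← hconj, mul_assoc, charpoly_mul_comm, mul_assoc, hinv,
    mul_one]

theorem Matrix.charpoly_sub_scalar_eq_prod {A : Matrix n n R} {s : Multiset R}
    (hA : A.charpoly = (s.map fun r => X - C r).prod) (μ : R) :
    (A - scalar n μ).charpoly = ((s.map (· - μ)).map fun r => X - C r).prod := by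
  rw [charpoly_sub_scalar, hA, multiset_prod_comp, Multiset.map_map, Multiset.map_map]
  congr 1
  refine Multiset.map_congr rfl fun r _ => ?_
  simp only [Function.comp_apply, sub_comp, X_comp, C_comp, C_sub]
  ring

theorem Matrix.charpoly_fromBlocks_one_one_eq_prod {A : Matrix n n R} {s : Multiset R}
    (hA : A.charpoly = (s.map fun r => X - C r).prod) :
    (fromBlocks A 1 1 A).charpoly = ((cylSpectrum s).map fun r => X - C r).prod := by
  have hplus : A + 1 = A - scalar n (-1) := by simp [sub_eq_add_neg]
  have hminus : A - 1 = A - scalar n 1 := by simp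
  rw [charpoly_fromBlocks_one_one_s14, hplus, hminus, charpoly_sub_scalar_eq_prod hA,
    charpoly_sub_scalar_eq_prod hA, cylSpectrum, Multiset.map_add, Multiset.prod_add]
  simp only [sub_neg_eq_add]

theorem charpoly_iterCyl_eq_prod {A : Matrix n n R} {s : Multiset R}
    (hA : A.charpoly = (s.map fun r => X - C r).prod) (N : ℕ) :
    (iterCyl A N).charpoly = ((cylSpectrum^[N] s).map fun r => X - C r).prod := by
  induction N with
  | zero => exact hA
  | succ N ih =>
    rw [Function.iterate_succ_apply']
    exact charpoly_fromBlocks_one_one_eq_prod ih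

end CommRing

section Field

variable {K : Type*} [Field K] {n : Type*} [Fintype n] [DecidableEq n]

theorem Matrix.charpoly_smul (A : Matrix n n K) {c : K} (hc : c ≠ 0) :
    (c • A).charpoly = C (c ^ Fintype.card n) * A.charpoly.comp (C c⁻¹ * X) := by
  have hchar : charmatrix (c • A) =
      C c • (compRingHom (C c⁻¹ * X)).mapMatrix (charmatrix A) := by
    ext i j
    by_cases h : i = j
    · subst h
      simp [mul_sub, mul_inv_cancel_left₀ hc]
    · simp [h]
  rw [charpoly, hchar, det_smul, ← RingHom.map_det, charpoly, compRingHom, C_pow]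
  rfl

theorem Matrix.charpoly_smul_eq_prod {A : Matrix n n K} {s : Multiset K}
    (hA : A.charpoly = (s.map fun r => X - C r).prod) {c : K} (hc : c ≠ 0) :
    (c • A).charpoly = ((s.map (c * ·)).map fun r => X - C r).prod := by
  have hcard : Multiset.card s = Fintype.card n := by
    rw [← natDegree_multiset_prod_X_sub_C_eq_card, ← hA, charpoly_natDegree_eq_dim]
  rw [charpoly_smul A hc, hA, multiset_prod_comp, ← hcard, ← Multiset.prod_replicate,
    ← Multiset.map_const', map_multiset_prod, Multiset.map_map, Multiset.map_map,
    ← Multiset.prod_map_mul, Multiset.map_map]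
  congr 1
  refine Multiset.map_congr rfl fun r _ => ?_
  simp only [Function.comp_apply, sub_comp, X_comp, C_comp, C_mul]
  rw [mul_sub, ← mul_assoc, ← C_mul, mul_inv_cancel₀ hc, C_1, one_mul]

end Field

theorem exists_cylSpectrum_iterate_zero_eq_cons_cons {R : Type*} [CommRing R] [LinearOrder R]
    [IsStrictOrderedRing R] (N : ℕ) :
    ∃ t : Multiset R, cylSpectrum^[N + 2] {0} = ((N : R) + 2) ::ₘ (N : R) ::ₘ t ∧
      ∀ x ∈ t, x ≤ N := by
  induction N with
  | zero =>
    refine ⟨{0, -2}, ?_, by simp⟩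
    norm_num [cylSpectrum]
    exact Multiset.cons_swap _ _ _
  | succ N ih =>
    obtain ⟨t, hs, ht⟩ := ih
    refine ⟨t.map (· + 1) + ((N : R) + 2 - 1) ::ₘ ((N : R) - 1) ::ₘ t.map (· - 1), ?_, ?_⟩
    · rw [Function.iterate_succ_apply', hs, cylSpectrum]
      simp only [Multiset.map_cons, Nat.cast_succ]
      rw [Multiset.cons_add, Multiset.cons_add]
      congr 1
      ring
    · simp only [Multiset.mem_add, Multiset.mem_cons, Multiset.mem_map, Nat.cast_succ]
      rintro x (⟨y, hy, rfl⟩ | rfl | rfl | ⟨y, hy, rfl⟩)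
      · linarith [ht y hy]
      · linarith
      · linarith
      · linarith [ht y hy]

theorem Multiset.sort_ge_cons_cons {α : Type*} [LinearOrder α] {a b : α} {t : Multiset α}
    (hba : b ≤ a) (ht : ∀ x ∈ t, x ≤ b) :
    (a ::ₘ b ::ₘ t).sort (· ≥ ·) = a :: b :: t.sort (· ≥ ·) := by
  rw [sort_cons _ _ _ ?_, sort_cons _ _ _ ht]
  simp only [mem_cons, forall_eq_or_imp]
  exact ⟨hba, fun x hx => (ht x hx).trans hba⟩

def squareVertexEquiv : CylIdx Unit 2 ≃ (Fin 2 → Bool) where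
  toFun := Sum.elim (Sum.elim (fun _ => ![false, false]) (fun _ => ![true, false]))
    (Sum.elim (fun _ => ![false, true]) (fun _ => ![true, true]))
  invFun v := cond (v 1) (.inr (cond (v 0) (.inr ()) (.inl ())))
    (.inl (cond (v 0) (.inr ()) (.inl ())))
  left_inv := by rintro ((⟨⟩ | ⟨⟩) | (⟨⟩ | ⟨⟩)) <;> rfl
  right_inv := by unfold Function.RightInverse Function.LeftInverse; decide

theorem hypercube_two_adj_iff (u v : Fin 2 → Bool) :
    (hypercube 2).Adj u v ↔ (u 0 != v 0) ^^ (u 1 != v 1) := by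
  revert u v
  simp only [hypercube, ExistsUnique]
  decide

theorem adjMatrix_hypercube_two :
    (hypercube 2).adjMatrix ℝ = reindex squareVertexEquiv squareVertexEquiv (iterCyl 0 2) := by
  ext u v
  obtain ⟨i, rfl⟩ := squareVertexEquiv.surjective u
  obtain ⟨j, rfl⟩ := squareVertexEquiv.surjective v
  rw [reindex_apply, submatrix_apply, Equiv.symm_apply_apply, Equiv.symm_apply_apply,
    SimpleGraph.adjMatrix_apply]
  rcases i with ((⟨⟩ | ⟨⟩) | (⟨⟩ | ⟨⟩)) <;> rcases j with ((⟨⟩ | ⟨⟩) | (⟨⟩ | ⟨⟩)) <;>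
    simp only [hypercube_two_adj_iff] <;> rfl

theorem charpoly_iterCyl_hypercube_two (N : ℕ) :
    (iterCyl ((hypercube 2).adjMatrix ℝ) N).charpoly =
      ((cylSpectrum^[N + 2] {0}).map fun r => X - C r).prod := by
  have hpoint : (0 : Matrix Unit Unit ℝ).charpoly =
      (({0} : Multiset ℝ).map fun r => X - C r).prod := by
    simp
  have hsquare := charpoly_iterCyl_eq_prod hpoint 2
  rw [← charpoly_reindex squareVertexEquiv, ← adjMatrix_hypercube_two] at hsquare
  rw [charpoly_iterCyl_eq_prod hsquare, ← Function.iterate_add_apply]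

/-- For the iterated graph cylinders of the square `Q₂`, the largest eigenvalue of `A_N`
is `N + 2`, the second largest is `N`, and the spectral gap `λ₁ - λ₂` of the normalized
matrix `W_N = A_N / (N + 2)` is exactly `2 / (N + 2)`. -/
theorem iterCyl_square_spectral_gap (N : ℕ) :
    (Multiset.sort (iterCyl ((hypercube 2).adjMatrix ℝ) N).charpoly.roots (· ≥ ·))[0]? =
      some ((N : ℝ) + 2) ∧
    (Multiset.sort (iterCyl ((hypercube 2).adjMatrix ℝ) N).charpoly.roots (· ≥ ·))[1]? =
      some (N : ℝ) ∧
    (Multiset.sort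
        ((((N : ℝ) + 2)⁻¹ • iterCyl ((hypercube 2).adjMatrix ℝ) N).charpoly.roots) (· ≥ ·))[0]?.getD 0 -
      (Multiset.sort
        ((((N : ℝ) + 2)⁻¹ • iterCyl ((hypercube 2).adjMatrix ℝ) N).charpoly.roots) (· ≥ ·))[1]?.getD 0 =
      2 / ((N : ℝ) + 2) := by
  obtain ⟨t, hspec, ht⟩ := exists_cylSpectrum_iterate_zero_eq_cons_cons (R := ℝ) N
  have hA := charpoly_iterCyl_hypercube_two N
  rw [hspec] at hA
  have hc : (0 : ℝ) < ((N : ℝ) + 2)⁻¹ := by positivity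
  have hsort : (((N : ℝ) + 2) ::ₘ (N : ℝ) ::ₘ t).sort (· ≥ ·) =
      ((N : ℝ) + 2) :: (N : ℝ) :: t.sort (· ≥ ·) :=
    Multiset.sort_ge_cons_cons (by linarith) ht
  rw [charpoly_smul_eq_prod hA hc.ne', hA, roots_multiset_prod_X_sub_C,
    roots_multiset_prod_X_sub_C,
    ← Multiset.map_sort (((N : ℝ) + 2)⁻¹ * ·) _ (· ≥ ·) (· ≥ ·)
      fun _ _ _ _ => (mul_le_mul_iff_of_pos_left hc).symm, hsort]
  simp only [List.map_cons, List.getElem?_cons_zero, List.getElem?_cons_succ, Option.getD_some,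
    true_and]
  field_simp
  ring
end
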